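/- Let H : ℝ³ → ℝ³ be an axisymmetric vector field with pure swirl, H(x) = H_θ(r,z) e_θ(x), and let φ ∈ 𝒮(ℝ³) be radially symmetric. Then the convolution φ * H is again axisymmetric with pure swirl; in particular, for every x with r(x) ≠ 0, (φ*H)(x) = ( ∫_{ℝ³} φ(x−y) H_θ(y) (e_θ(y)·e_θ(x)) dy ) e_θ(x). -/

import Mathlib

noncomputable section
open MeasureTheory Real Set Filter
open scoped ENNReal Topology

abbrev E3 : Type := EuclideanSpace ℝ (Fin 3)
abbrev C3 : Type := EuclideanSpace ℂ (Fin 3)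

/-- Constructor for vectors in `E3`. -/
def v3 (a b c : ℝ) : E3 := (WithLp.equiv 2 (Fin 3 → ℝ)).symm ![a, b, c]

/-- Complexification of a real vector field. -/
def vC (f : E3 → E3) : E3 → C3 :=
  fun x => (WithLp.equiv 2 (Fin 3 → ℂ)).symm (fun i => (f x i : ℂ))

/-- Fourier transform of a vector field on `ℝ³`. -/
def fT (f : E3 → E3) : E3 → C3 := FourierTransform.fourier (vC f)

/-- Inverse Fourier transform. -/
def fTinv (g : E3 → C3) : E3 → C3 := FourierTransformInv.fourierInv g

/-- distance to the `z`-axis (cylindrical radius). -/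
def rr (x : E3) : ℝ := Real.sqrt (x 0 ^ 2 + x 1 ^ 2)

def er (x : E3) : E3 := v3 (x 0 / rr x) (x 1 / rr x) 0
def etheta (x : E3) : E3 := v3 (-(x 1) / rr x) (x 0 / rr x) 0
def ez : E3 := v3 0 0 1

def dot3 (a b : E3) : ℝ := ∑ i, a i * b i

def cross (a b : E3) : E3 :=
  v3 (a 1 * b 2 - a 2 * b 1) (a 2 * b 0 - a 0 * b 2) (a 0 * b 1 - a 1 * b 0)

/-- partial derivative in the `i`-th coordinate direction. -/
def pd (i : Fin 3) (f : E3 → ℝ) (x : E3) : ℝ := fderiv ℝ f x (EuclideanSpace.single i 1)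

def divg (F : E3 → E3) (x : E3) : ℝ := ∑ i, pd i (fun y => F y i) x

def curl (F : E3 → E3) (x : E3) : E3 :=
  v3 (pd 1 (fun y => F y 2) x - pd 2 (fun y => F y 1) x)
     (pd 2 (fun y => F y 0) x - pd 0 (fun y => F y 2) x)
     (pd 0 (fun y => F y 1) x - pd 1 (fun y => F y 0) x)

def lap (f : E3 → ℝ) (x : E3) : ℝ := ∑ i, pd i (fun y => pd i f y) x

def lapV (F : E3 → E3) (x : E3) : E3 :=
  v3 (lap (fun y => F y 0) x) (lap (fun y => F y 1) x) (lap (fun y => F y 2) x)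

def grad3 (f : E3 → ℝ) (x : E3) : E3 := v3 (pd 0 f x) (pd 1 f x) (pd 2 f x)

/-- advection term `(F·∇G)ᵢ = Σⱼ Fⱼ ∂ⱼ Gᵢ`. -/
def adv (F G : E3 → E3) (x : E3) : E3 :=
  (WithLp.equiv 2 (Fin 3 → ℝ)).symm (fun i => ∑ j, F x j * pd j (fun y => G y i) x)

/-- homogeneous Sobolev `Ẇ^{s,p}` semi-norm of a scalar function on `ℝ^d`,
defined via the Fourier multiplier `|ξ|^s`. -/
def wsp (d : ℕ) (s p : ℝ) (f : EuclideanSpace ℝ (Fin d) → ℝ) : ℝ≥0∞ :=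
  eLpNorm (FourierTransformInv.fourierInv fun ξ =>
      ((‖ξ‖ ^ s : ℝ) : ℂ) • FourierTransform.fourier (fun x => (f x : ℂ)) ξ)
    (ENNReal.ofReal p) volume

/-- homogeneous Sobolev `Ẇ^{s,p}` semi-norm of a vector field on `ℝ³`. -/
def wspV (s p : ℝ) (F : E3 → E3) : ℝ≥0∞ :=
  eLpNorm (fTinv fun ξ => ((‖ξ‖ ^ s : ℝ) : ℂ) • fT F ξ) (ENNReal.ofReal p) volume

/-- homogeneous Sobolev `Ḣ^s` norm of a vector field on `ℝ³` (Plancherel form). -/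
def hsNorm (s : ℝ) (F : E3 → E3) : ℝ≥0∞ :=
  (∫⁻ ξ, ENNReal.ofReal (‖ξ‖ ^ (2 * s)) * (‖fT F ξ‖₊ : ℝ≥0∞) ^ 2) ^ (1 / 2 : ℝ)

/-- dyadic weight `2^{ks}`. -/
def w2 (s : ℝ) (k : ℤ) : ℝ≥0∞ := ENNReal.ofReal ((2 : ℝ) ^ ((k : ℝ) * s))

/-- `L²` norm of the (sharp) Littlewood–Paley block of a vector field. -/
def blockL2 (k : ℤ) (F : E3 → E3) : ℝ≥0∞ :=
  eLpNorm (fTinv fun ξ => if (2:ℝ) ^ k ≤ ‖ξ‖ ∧ ‖ξ‖ < (2:ℝ) ^ (k + 1) then fT F ξ else 0)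
    2 volume

/-- homogeneous Besov `Ḃ^s_{2,q}` norm. -/
def besov (s : ℝ) (q : ℝ≥0∞) (F : E3 → E3) : ℝ≥0∞ :=
  if q = ∞ then ⨆ k : ℤ, w2 s k * blockL2 k F
  else (∑' k : ℤ, (w2 s k * blockL2 k F) ^ q.toReal) ^ (1 / q.toReal)

/-- time-Lebesgue norm over a time set `S` of an `ℝ≥0∞`-valued quantity. -/
def tLp (S : Set ℝ) (m : ℝ≥0∞) (g : ℝ → ℝ≥0∞) : ℝ≥0∞ :=
  if m = ∞ then ⨆ t ∈ S, g t
  else (∫⁻ t in S, g t ^ m.toReal) ^ (1 / m.toReal)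

/-- Chemin–Lerner norm `L̃^m(S; Ḃ^s_{2,q})`. -/
def clNorm (S : Set ℝ) (m : ℝ≥0∞) (s : ℝ) (q : ℝ≥0∞) (B : ℝ → E3 → E3) : ℝ≥0∞ :=
  if q = ∞ then ⨆ k : ℤ, w2 s k * tLp S m (fun t => blockL2 k (B t))
  else (∑' k : ℤ, (w2 s k * tLp S m (fun t => blockL2 k (B t))) ^ q.toReal) ^ (1 / q.toReal)

/-- `(-Δ)⁻¹` for scalar functions, via the Fourier multiplier `1/(4π²|ξ|²)`. -/
def invNegLapS (f : E3 → ℝ) (x : E3) : ℝ :=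
  (FourierTransformInv.fourierInv (fun ξ => ((1 / (4 * π ^ 2 * ‖ξ‖ ^ 2) : ℝ) : ℂ) •
      FourierTransform.fourier (fun y => (f y : ℂ)) ξ) x).re

/-- Leray projector `P = Id - ∇Δ⁻¹ div = Id + ∇(-Δ)⁻¹ div`. -/
def leray (F : E3 → E3) (x : E3) : E3 :=
  F x + grad3 (invNegLapS (divg F)) x

/-- time derivative of a time-dependent vector field. -/
def dtV (F : ℝ → E3 → E3) (t : ℝ) (x : E3) : E3 :=
  v3 (deriv (fun s => F s x 0) t) (deriv (fun s => F s x 1) t) (deriv (fun s => F s x 2) t)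

/-- second time derivative of a time-dependent vector field. -/
def dttV (F : ℝ → E3 → E3) (t : ℝ) (x : E3) : E3 :=
  v3 (deriv (deriv fun s => F s x 0) t) (deriv (deriv fun s => F s x 1) t)
     (deriv (deriv fun s => F s x 2) t)

/-- joint smoothness of a time-dependent vector field. -/
def SmoothTF (F : ℝ → E3 → E3) : Prop := ContDiff ℝ (⊤ : ℕ∞) (fun p : ℝ × E3 => F p.1 p.2)

/-- directional derivative `(v·∇)H` of a vector field. -/
def dirD (H : E3 → E3) (x v : E3) : E3 :=
  v3 (fderiv ℝ (fun y => H y 0) x v) (fderiv ℝ (fun y => H y 1) x v)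
     (fderiv ℝ (fun y => H y 2) x v)


/-- rotation by angle `α` about the `z`-axis. -/
def rotz (α : ℝ) (x : E3) : E3 :=
  v3 (Real.cos α * x 0 - Real.sin α * x 1) (Real.sin α * x 0 + Real.cos α * x 1) (x 2)


section AuxConv
set_option maxHeartbeats 1000000

@[simp] lemma v3_0 (a b c : ℝ) : (v3 a b c) 0 = a := rfl
@[simp] lemma v3_1 (a b c : ℝ) : (v3 a b c) 1 = b := rfl
@[simp] lemma v3_2 (a b c : ℝ) : (v3 a b c) 2 = c := rfl

lemma v3_ext {u v : E3} (h0 : u 0 = v 0) (h1 : u 1 = v 1) (h2 : u 2 = v 2) : u = v := by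
  ext i
  fin_cases i
  · exact h0
  · exact h1
  · exact h2

lemma nsq (x : E3) : ‖x‖^2 = x 0^2 + x 1^2 + x 2^2 := by
  rw [← real_inner_self_eq_norm_sq, PiLp.inner_apply]
  simp [Fin.sum_univ_three]

lemma inner3 (a b : E3) : (inner ℝ a b : ℝ) = a 0 * b 0 + a 1 * b 1 + a 2 * b 2 := by
  simp [PiLp.inner_apply, Fin.sum_univ_three]; ring

lemma dot3_eq (a b : E3) : dot3 a b = a 0 * b 0 + a 1 * b 1 + a 2 * b 2 := by
  simp [dot3, Fin.sum_univ_three]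

lemma refl_invol (e : E3) (he : ‖e‖ = 1) (y : E3) :
    (y - (2 * (inner ℝ e y : ℝ)) • e) -
      (2 * (inner ℝ e (y - (2 * (inner ℝ e y : ℝ)) • e) : ℝ)) • e = y := by
  have h1 : (inner ℝ e (y - (2 * (inner ℝ e y : ℝ)) • e) : ℝ) = -(inner ℝ e y : ℝ) := by
    rw [inner_sub_right, real_inner_smul_right, real_inner_self_eq_norm_sq, he]
    ring
  rw [h1]
  module

def reflOf (e : E3) (he : ‖e‖ = 1) : E3 ≃ₗᵢ[ℝ] E3 where
  toLinearEquiv :=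
  { toFun := fun y => y - (2 * (inner ℝ e y : ℝ)) • e
    invFun := fun y => y - (2 * (inner ℝ e y : ℝ)) • e
    map_add' := by
      intro y z
      show (y + z) - (2 * (inner ℝ e (y + z) : ℝ)) • e =
        (y - (2 * (inner ℝ e y : ℝ)) • e) + (z - (2 * (inner ℝ e z : ℝ)) • e)
      rw [inner_add_right]
      module
    map_smul' := by
      intro c y
      show (c • y) - (2 * (inner ℝ e (c • y) : ℝ)) • e =
        (RingHom.id ℝ) c • (y - (2 * (inner ℝ e y : ℝ)) • e)
      rw [real_inner_smul_right]
      simp only [RingHom.id_apply]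
      module
    left_inv := refl_invol e he
    right_inv := refl_invol e he }
  norm_map' := by
    intro y
    show ‖y - (2 * (inner ℝ e y : ℝ)) • e‖ = ‖y‖
    rw [← Real.sqrt_sq (norm_nonneg _), ← Real.sqrt_sq (norm_nonneg y)]
    congr 1
    have h2 : (inner ℝ y ((2 * (inner ℝ e y : ℝ)) • e) : ℝ) = 2 * (inner ℝ e y : ℝ)^2 := by
      rw [real_inner_smul_right, real_inner_comm]; ring
    rw [norm_sub_sq_real, h2, norm_smul, he, mul_one, Real.norm_eq_abs, sq_abs]
    ring

lemma reflOf_apply (e : E3) (he : ‖e‖ = 1) (y : E3) (i : Fin 3) :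
    reflOf e he y i = y i - (2 * (inner ℝ e y : ℝ)) * e i := by
  show (y - (2 * (inner ℝ e y : ℝ)) • e) i = _
  simp [PiLp.sub_apply, PiLp.smul_apply, smul_eq_mul]

lemma rr_sq (z : E3) : rr z ^ 2 = z 0 ^ 2 + z 1 ^ 2 :=
  Real.sq_sqrt (by positivity)

lemma etheta_norm {x : E3} (hx : rr x ≠ 0) : ‖etheta x‖ = 1 := by
  have h : ‖etheta x‖ ^ 2 = 1 := by
    rw [nsq]
    simp only [etheta, v3_0, v3_1, v3_2]
    field_simp
    linear_combination (-1) * rr_sq x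
  rw [← Real.sqrt_sq (norm_nonneg _), h, Real.sqrt_one]

lemma inner_etheta_self (x : E3) : (inner ℝ (etheta x) x : ℝ) = 0 := by
  rw [inner3]
  simp only [etheta, v3_0, v3_1, v3_2]
  ring

lemma reflOf_fix {x : E3} (he : ‖etheta x‖ = 1) : reflOf (etheta x) he x = x := by
  apply v3_ext <;> rw [reflOf_apply, inner_etheta_self] <;> ring

lemma reflOf_z (e : E3) (he : ‖e‖ = 1) (h2 : e 2 = 0) (y : E3) :
    (reflOf e he y) 2 = y 2 := by
  rw [reflOf_apply, h2]; ring

lemma reflOf_rr {x : E3} (he : ‖etheta x‖ = 1) (y : E3) :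
    rr (reflOf (etheta x) he y) = rr y := by
  set S := reflOf (etheta x) he
  have hn : ‖S y‖ = ‖y‖ := S.norm_map y
  have h2 : (S y) 2 = y 2 := reflOf_z _ he rfl y
  have key : (S y) 0 ^ 2 + (S y) 1 ^ 2 = y 0 ^ 2 + y 1 ^ 2 := by
    have e1 := nsq (S y)
    have e2 := nsq y
    rw [hn, h2] at e1
    linarith
  rw [rr, rr, key]

@[simp] lemma etheta_0 (z : E3) : etheta z 0 = -(z 1) / rr z := rfl
@[simp] lemma etheta_1 (z : E3) : etheta z 1 = z 0 / rr z := rfl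
@[simp] lemma etheta_2 (z : E3) : etheta z 2 = 0 := rfl

lemma eth_add {x : E3} (hx : rr x ≠ 0) (he : ‖etheta x‖ = 1) (y : E3) :
    etheta y + etheta (reflOf (etheta x) he y) =
      (2 * dot3 (etheta y) (etheta x)) • etheta x := by
  have h1 : (x 0 / rr x) ^ 2 + (x 1 / rr x) ^ 2 = 1 := by
    field_simp
    linear_combination (-1) * rr_sq x
  set S := reflOf (etheta x) he with hS
  have hrrS : rr (S y) = rr y := reflOf_rr he y
  apply v3_ext <;>
    simp only [PiLp.add_apply, PiLp.smul_apply, smul_eq_mul, etheta_0, etheta_1, etheta_2, hrrS,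
      dot3_eq, hS, reflOf_apply, inner3, reflOf_rr he y]
  · linear_combination (2 * y 1 / rr y) * h1
  · linear_combination (-2 * y 0 / rr y) * h1
  · ring

lemma rr_rotz (α : ℝ) (y : E3) : rr (rotz α y) = rr y := by
  rw [rr, rr]
  congr 1
  simp only [rotz, v3_0, v3_1]
  linear_combination (y 0 ^ 2 + y 1 ^ 2) * Real.sin_sq_add_cos_sq α

lemma rotz_rotz_neg (α : ℝ) (x : E3) : rotz (-α) (rotz α x) = x := by
  apply v3_ext <;>
    simp only [rotz, v3_0, v3_1, v3_2, Real.cos_neg, Real.sin_neg]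
  · linear_combination x 0 * Real.sin_sq_add_cos_sq α
  · linear_combination x 1 * Real.sin_sq_add_cos_sq α

lemma rotz_neg_rotz (α : ℝ) (x : E3) : rotz α (rotz (-α) x) = x := by
  apply v3_ext <;>
    simp only [rotz, v3_0, v3_1, v3_2, Real.cos_neg, Real.sin_neg]
  · linear_combination x 0 * Real.sin_sq_add_cos_sq α
  · linear_combination x 1 * Real.sin_sq_add_cos_sq α

def rotL (α : ℝ) : E3 ≃ₗᵢ[ℝ] E3 where
  toLinearEquiv :=
  { toFun := rotz α
    invFun := rotz (-α)
    map_add' := by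
      intro x y
      apply v3_ext <;>
        simp only [rotz, v3_0, v3_1, v3_2, PiLp.add_apply] <;> ring
    map_smul' := by
      intro c x
      apply v3_ext <;>
        simp only [rotz, v3_0, v3_1, v3_2, PiLp.smul_apply, smul_eq_mul,
          RingHom.id_apply] <;> ring
    left_inv := rotz_rotz_neg α
    right_inv := rotz_neg_rotz α }
  norm_map' := by
    intro x
    show ‖rotz α x‖ = ‖x‖
    rw [← Real.sqrt_sq (norm_nonneg _), ← Real.sqrt_sq (norm_nonneg x)]
    congr 1
    rw [nsq, nsq]
    simp only [rotz, v3_0, v3_1, v3_2]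
    linear_combination (x 0 ^ 2 + x 1 ^ 2) * Real.sin_sq_add_cos_sq α

lemma etheta_rotz (α : ℝ) (y : E3) : etheta (rotz α y) = rotz α (etheta y) := by
  apply v3_ext <;>
    simp only [etheta_0, etheta_1, etheta_2, rr_rotz] <;>
    simp only [rotz, v3_0, v3_1, v3_2, etheta_0, etheta_1, etheta_2] <;> ring

lemma integ (φ : SchwartzMap E3 ℝ) (H : E3 → E3) (hHc : Continuous H)
    (hHi : Integrable H volume) (x : E3) :
    Integrable (fun y => φ (x - y) • H y) volume := by
  obtain ⟨C, -, hC⟩ := φ.decay 0 0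
  have hCb : ∀ z : E3, ‖φ z‖ ≤ C := by
    intro z
    have := hC z
    simpa [norm_iteratedFDeriv_zero] using this
  refine (hHi.norm.const_mul C).mono' ?_ ?_
  · exact ((φ.continuous.comp (continuous_const.sub continuous_id)).smul hHc).aestronglyMeasurable
  · filter_upwards with y
    rw [norm_smul]
    exact mul_le_mul_of_nonneg_right (hCb _) (norm_nonneg _)


end AuxConv

/-- Convolution of a radial Schwartz function with an axisymmetric pure-swirl
field is again axisymmetric with pure swirl, with the explicit formula
`(φ*H)(x) = (∫ φ(x−y) H_θ(y) (e_θ(y)·e_θ(x)) dy) e_θ(x)` for `r(x) ≠ 0`. -/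
theorem convolution_pure_swirl (φ : SchwartzMap E3 ℝ)
    (hrad : ∀ x y : E3, ‖x‖ = ‖y‖ → φ x = φ y)
    (H : E3 → E3) (Hθ : ℝ × ℝ → ℝ) (hHc : Continuous H) (hHi : Integrable H volume)
    (hswirl : ∀ x : E3, H x = Hθ (rr x, x 2) • etheta x) :
    (∀ (α : ℝ) (x : E3),
        (∫ y : E3, φ (rotz α x - y) • H y) = rotz α (∫ y : E3, φ (x - y) • H y)) ∧
    (∀ x : E3, rr x ≠ 0 →
        (∫ y : E3, φ (x - y) • H y) =
          (∫ y : E3, φ (x - y) * Hθ (rr y, y 2) * dot3 (etheta y) (etheta x)) •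
            etheta x) := by
  constructor
  · intro α x
    have step1 : (∫ y : E3, φ (rotz α x - y) • H y)
        = ∫ y : E3, φ (rotz α x - rotL α y) • H (rotL α y) :=
      (MeasureTheory.integral_comp (rotL α) fun y => φ (rotz α x - y) • H y).symm
    have hpt : ∀ y : E3, φ (rotz α x - rotL α y) • H (rotL α y)
        = (rotL α).toLinearIsometry (φ (x - y) • H y) := by
      intro y
      have hxy : rotz α x - rotL α y = rotL α (x - y) := by
        rw [map_sub]; rfl
      have hφ : φ ((rotL α) (x - y)) = φ (x - y) :=
        hrad _ _ ((rotL α).norm_map (x - y))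
      have hH : H ((rotL α) y) = (rotL α) (H y) := by
        show H (rotz α y) = rotz α (H y)
        rw [hswirl (rotz α y), hswirl y, rr_rotz]
        have h2 : (rotz α y) 2 = y 2 := rfl
        rw [h2, etheta_rotz]
        exact (_root_.map_smul (rotL α) _ _).symm
      rw [hxy, hφ, hH, ← _root_.map_smul]
      rfl
    rw [step1]
    simp only [hpt]
    rw [(rotL α).toLinearIsometry.integral_comp_comm]
    rfl
  · intro x hx
    have he : ‖etheta x‖ = 1 := etheta_norm hx
    set S := reflOf (etheta x) he with hSdef
    have hfix : S x = x := reflOf_fix he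
    have hz : ∀ y : E3, (S y) 2 = y 2 := fun y => reflOf_z _ he rfl y
    have hrrS : ∀ y : E3, rr (S y) = rr y := fun y => reflOf_rr he y
    have hxy : ∀ y : E3, x - S y = S (x - y) := by
      intro y; rw [map_sub, hfix]
    have hg : ∀ y : E3, φ (x - S y) • H (S y)
        = (φ (x - y) * Hθ (rr y, y 2)) • etheta (S y) := by
      intro y
      rw [hxy y, hrad _ _ (S.norm_map (x - y)), hswirl (S y), hrrS y, hz y, smul_smul]
    have hfun1 : (fun y : E3 => φ (x - y) • H y)
        = fun y => (φ (x - y) * Hθ (rr y, y 2)) • etheta y := by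
      funext y; rw [hswirl y, smul_smul]
    have hint : Integrable (fun y : E3 => φ (x - y) • H y) := integ φ H hHc hHi x
    have hint1 : Integrable (fun y : E3 => (φ (x - y) * Hθ (rr y, y 2)) • etheta y) := by
      rw [← hfun1]; exact hint
    have hint2 : Integrable (fun y : E3 => (φ (x - y) * Hθ (rr y, y 2)) • etheta (S y)) := by
      have hcomp : (fun y : E3 => (φ (x - y) * Hθ (rr y, y 2)) • etheta (S y))
          = (fun y : E3 => φ (x - y) • H y) ∘ S := by
        funext y
        simp only [Function.comp_apply]
        exact (hg y).symm
      rw [hcomp]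
      exact (MeasureTheory.integrable_comp S _).2 hint
    have hI1 : (∫ y : E3, φ (x - y) • H y)
        = ∫ y : E3, (φ (x - y) * Hθ (rr y, y 2)) • etheta y := by
      rw [hfun1]
    have h2 : (∫ y : E3, φ (x - y) • H y)
        = ∫ y : E3, (φ (x - y) * Hθ (rr y, y 2)) • etheta (S y) := by
      rw [← MeasureTheory.integral_comp S (fun y => φ (x - y) • H y)]
      simp only [hg]
    have key : ∀ y : E3, (φ (x - y) * Hθ (rr y, y 2)) • etheta y
        + (φ (x - y) * Hθ (rr y, y 2)) • etheta (S y)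
        = (2 * (φ (x - y) * Hθ (rr y, y 2) * dot3 (etheta y) (etheta x))) • etheta x := by
      intro y
      rw [← smul_add, hSdef, eth_add hx he y, smul_smul]
      congr 1
      ring
    have h2I : (2:ℝ) • (∫ y : E3, φ (x - y) • H y)
        = (2:ℝ) • ((∫ y : E3, φ (x - y) * Hθ (rr y, y 2) * dot3 (etheta y) (etheta x)) •
            etheta x) := by
      rw [two_smul]
      calc (∫ y : E3, φ (x - y) • H y) + (∫ y : E3, φ (x - y) • H y)
          = (∫ y : E3, (φ (x - y) * Hθ (rr y, y 2)) • etheta y)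
            + (∫ y : E3, (φ (x - y) * Hθ (rr y, y 2)) • etheta (S y)) := by
            rw [← hI1, ← h2]
        _ = ∫ y : E3, ((φ (x - y) * Hθ (rr y, y 2)) • etheta y
            + (φ (x - y) * Hθ (rr y, y 2)) • etheta (S y)) := (integral_add hint1 hint2).symm
        _ = ∫ y : E3, (2 * (φ (x - y) * Hθ (rr y, y 2) * dot3 (etheta y) (etheta x))) •
            etheta x := by simp only [key]
        _ = (∫ y : E3, 2 * (φ (x - y) * Hθ (rr y, y 2) * dot3 (etheta y) (etheta x))) •
            etheta x := integral_smul_const _ _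
        _ = ((2:ℝ) * ∫ y : E3, φ (x - y) * Hθ (rr y, y 2) * dot3 (etheta y) (etheta x)) •
            etheta x := by rw [integral_const_mul]
        _ = (2:ℝ) • ((∫ y : E3, φ (x - y) * Hθ (rr y, y 2) * dot3 (etheta y) (etheta x)) •
            etheta x) := (smul_smul (2:ℝ) _ _).symm
    exact smul_right_injective E3 (two_ne_zero) h2I


end
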